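/- Let n ≥ 1 and let S and S' be two stabilizer groups of n-qubit signed Pauli matrices with S ≠ S'. Then the intersection S ∩ S' has at most 2^{n−1} elements. -/

import Mathlib

open Matrix

noncomputable section

/-- The four single-qubit Pauli matrices: `I₂`, `X`, `Y`, `Z`. -/
def pauli : Fin 4 → Matrix (Fin 2) (Fin 2) ℂ
  | 0 => 1
  | 1 => !![0, 1; 1, 0]
  | 2 => !![0, -Complex.I; Complex.I, 0]
  | 3 => !![1, 0; 0, -1]

/-- The `n`-fold Kronecker product `A_{a 0} ⊗ ⋯ ⊗ A_{a (n-1)}` of single-qubit Pauli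
matrices, realized as a matrix indexed by bit strings. -/
def pauliTensor {n : ℕ} (a : Fin n → Fin 4) :
    Matrix (Fin n → Fin 2) (Fin n → Fin 2) ℂ :=
  fun z w => ∏ i, pauli (a i) (z i) (w i)

/-- A signed `n`-qubit Pauli matrix: `ε • (A₁ ⊗ ⋯ ⊗ Aₙ)` with `ε ∈ {1, -1}`. -/
def IsSignedPauli {n : ℕ} (M : Matrix (Fin n → Fin 2) (Fin n → Fin 2) ℂ) : Prop :=
  ∃ (ε : ℂ) (a : Fin n → Fin 4), (ε = 1 ∨ ε = -1) ∧ M = ε • pauliTensor a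

/-- A stabilizer group: a set of signed `n`-qubit Pauli matrices containing the identity,
closed under multiplication, pairwise commuting, not containing `-I`, of size `2^n`. -/
structure IsStabilizerGroup (n : ℕ)
    (S : Set (Matrix (Fin n → Fin 2) (Fin n → Fin 2) ℂ)) : Prop where
  mem_pauli : ∀ M ∈ S, IsSignedPauli M
  one_mem : (1 : Matrix (Fin n → Fin 2) (Fin n → Fin 2) ℂ) ∈ S
  mul_mem : ∀ M ∈ S, ∀ N ∈ S, M * N ∈ S
  mul_comm : ∀ M ∈ S, ∀ N ∈ S, M * N = N * M
  neg_one_not_mem : -(1 : Matrix (Fin n → Fin 2) (Fin n → Fin 2) ℂ) ∉ S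
  card_eq : S.ncard = 2 ^ n

/-- The stabilizer state associated to a stabilizer group: `ρ_S = 2^{-n} Σ_{Q ∈ S} Q`. -/
def stabState {n : ℕ} (S : Set (Matrix (Fin n → Fin 2) (Fin n → Fin 2) ℂ)) :
    Matrix (Fin n → Fin 2) (Fin n → Fin 2) ℂ :=
  ((2 : ℂ) ^ n)⁻¹ • ∑ᶠ Q ∈ S, Q

/-! Pick `Q ∈ S \ S'`. Since every signed Pauli matrix squares to `I`, left multiplication by `Q`
is injective and sends `S ∩ S'` into `S \ S'`: if `Q M ∈ S'` with `M ∈ S'`, then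
`Q = (Q M) M ∈ S'`. Hence `2 |S ∩ S'| ≤ |S| = 2^n`. -/

lemma pauli_mul_self (k : Fin 4) : pauli k * pauli k = 1 := by
  fin_cases k <;>
    · ext i j
      fin_cases i <;> fin_cases j <;>
        simp [pauli, Matrix.mul_apply, Fin.sum_univ_two, Matrix.one_apply]

lemma pauliTensor_mul_self {n : ℕ} (a : Fin n → Fin 4) :
    pauliTensor a * pauliTensor a = 1 := by
  ext z w
  have hfactor : ∀ y : Fin n → Fin 2, pauliTensor a z y * pauliTensor a y w
      = ∏ i, pauli (a i) (z i) (y i) * pauli (a i) (y i) (w i) := fun y =>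
    (Finset.prod_mul_distrib).symm
  -- the sum over bit strings of a product of coordinatewise factors is a product of sums
  have hsum : (pauliTensor a * pauliTensor a) z w
      = ∏ i, (pauli (a i) * pauli (a i)) (z i) (w i) := by
    simp only [Matrix.mul_apply, hfactor]
    exact (Fintype.prod_sum fun i b => pauli (a i) (z i) b * pauli (a i) b (w i)).symm
  rw [hsum]
  simp only [pauli_mul_self, Matrix.one_apply]
  by_cases h : z = w
  · simp [h]
  · obtain ⟨i, hi⟩ := Function.ne_iff.mp h
    simp only [h, if_false]
    exact Finset.prod_eq_zero (Finset.mem_univ i) (if_neg hi)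

lemma IsSignedPauli.mul_self {n : ℕ} {M : Matrix (Fin n → Fin 2) (Fin n → Fin 2) ℂ}
    (h : IsSignedPauli M) : M * M = 1 := by
  obtain ⟨ε, a, hε, rfl⟩ := h
  have hεε : ε * ε = 1 := by rcases hε with rfl | rfl <;> norm_num
  rw [Matrix.smul_mul, Matrix.mul_smul, smul_smul, hεε, one_smul, pauliTensor_mul_self]

namespace IsStabilizerGroup

variable {n : ℕ} {S : Set (Matrix (Fin n → Fin 2) (Fin n → Fin 2) ℂ)}

lemma finite (hS : IsStabilizerGroup n S) : S.Finite :=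
  Set.finite_of_ncard_ne_zero (by rw [hS.card_eq]; positivity)

lemma mul_self (hS : IsStabilizerGroup n S) {M} (hM : M ∈ S) : M * M = 1 :=
  (hS.mem_pauli M hM).mul_self

end IsStabilizerGroup

lemma Set.two_mul_ncard_inter_le_of_not_subset {G : Type*} [Monoid G] {S S' : Set G}
    (hSfin : S.Finite) (hSmul : ∀ a ∈ S, ∀ b ∈ S, a * b ∈ S)
    (hS'mul : ∀ a ∈ S', ∀ b ∈ S', a * b ∈ S') (hSsq : ∀ a ∈ S, a * a = 1)
    (hS'sq : ∀ a ∈ S', a * a = 1) (hnot : ¬ S ⊆ S') :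
    2 * (S ∩ S').ncard ≤ S.ncard := by
  obtain ⟨Q, hQS, hQS'⟩ := Set.not_subset.mp hnot
  have hmaps : Set.MapsTo (Q * ·) (S ∩ S') (S \ (S ∩ S')) := by
    rintro M ⟨hMS, hMS'⟩
    refine ⟨hSmul Q hQS M hMS, fun hQM => hQS' ?_⟩
    simpa [mul_assoc, hS'sq M hMS'] using hS'mul _ hQM.2 M hMS'
  have hinj : Set.InjOn (Q * ·) (S ∩ S') := fun M _ N _ h => by
    simpa [← mul_assoc, hSsq Q hQS] using congrArg (Q * ·) h
  have hle := Set.ncard_le_ncard_of_injOn _ hmaps hinj hSfin.sdiff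
  rw [Set.ncard_sdiff Set.inter_subset_left (hSfin.subset Set.inter_subset_left)] at hle
  have := Set.ncard_le_ncard (Set.inter_subset_left (t := S')) hSfin
  omega

theorem stabilizer_intersection_general {n : ℕ}
    (S S' : Set (Matrix (Fin n → Fin 2) (Fin n → Fin 2) ℂ))
    (hS : IsStabilizerGroup n S) (hS' : IsStabilizerGroup n S') (hne : S ≠ S') :
    (S ∩ S').ncard ≤ 2 ^ (n - 1) := by
  have hnot : ¬ S ⊆ S' := fun hsub =>
    hne (Set.eq_of_subset_of_ncard_le hsub (by rw [hS.card_eq, hS'.card_eq]) hS'.finite)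
  have h := Set.two_mul_ncard_inter_le_of_not_subset hS.finite hS.mul_mem hS'.mul_mem
    (fun _ => hS.mul_self) (fun _ => hS'.mul_self) hnot
  have hpow : 2 ^ n ≤ 2 * 2 ^ (n - 1) := by
    rw [← pow_succ']
    exact Nat.pow_le_pow_right two_pos (by omega)
  rw [hS.card_eq] at h
  omega

/-- Two distinct stabilizer groups of `n`-qubit signed Pauli matrices intersect in at most
`2^{n-1}` elements. -/
theorem stabilizer_intersection {n : ℕ} (hn : 1 ≤ n)
    (S S' : Set (Matrix (Fin n → Fin 2) (Fin n → Fin 2) ℂ))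
    (hS : IsStabilizerGroup n S) (hS' : IsStabilizerGroup n S') (hne : S ≠ S') :
    (S ∩ S').ncard ≤ 2 ^ (n - 1) :=
  stabilizer_intersection_general S S' hS hS' hne
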